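/- arXiv:1909.07139 — 3 statements merged into one kernel-verified Lean document; each statement's English description precedes it below -/
import Mathlib

section
/- If η = 0, then the distribution of e^{f_t} under the normal tempered stable model, with f_t = -σ²S_t/2 + σW_{S_t} + φt and martingale-normalizing drift φ, has a characteristic function φ^c(z) of the log-forward such that φ^c(-z - i/2) is an even real function of real z; consequently the Lewis integrand z ↦ e^{ixz}·φ^c(-z-i/2)/(z²+1/4) integrates to a function of the moneyness x which, after dividing by e^{x/2}, is symmetric in x. -/
open Complex

/-- If `η = 0`, the characteristic function `φ^c` of the log-forward in the normal tempered
stable model (with martingale-normalizing drift `φ`) satisfies: `φ^c(-z - i/2)` equals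
`L(σ²t(z²+1/4)/2)`, hence is an even, real function of real `z`; consequently the Lewis
integral, divided by `e^{x/2}`, is a symmetric function of the moneyness `x`. -/
theorem stmt3 (σ t φt : ℝ) (hσ : 0 < σ) (ht : 0 < t)
    (L : ℂ → ℂ)
    (hLreal : ∀ x : ℝ, 0 ≤ x → (L (x : ℂ)).im = 0)   -- L is the (real-valued) Laplace transform of S_t
    (hL0 : L 0 = 1)
    (φc : ℂ → ℂ)
    -- characteristic function of f_t with η = 0: drift μ = -σ²/2
    (hφc : ∀ u : ℂ, φc u = L (Complex.I * u * (σ^2 * t / 2) + u^2 * (σ^2 * t / 2))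
        * Complex.exp (Complex.I * u * (φt * t)))
    -- martingale condition E[e^{f_t}] = 1, i.e. φ^c(-i) = 1
    (hmart : φc (-Complex.I) = 1) :
    (∀ z : ℝ, φc (-(z : ℂ) - Complex.I / 2) = L ((σ^2 * t * (z^2 + 1/4) / 2 : ℝ) : ℂ)) ∧
    (∀ z : ℝ, φc (-(z : ℂ) - Complex.I / 2) = φc ((z : ℂ) - Complex.I / 2)) ∧
    (∀ z : ℝ, (φc (-(z : ℂ) - Complex.I / 2)).im = 0) ∧
    (∀ x : ℝ,
      (∫ z : ℝ, Complex.exp (Complex.I * (x : ℂ) * (z : ℂ))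
          * φc (-(z : ℂ) - Complex.I / 2) / ((z : ℂ)^2 + 1/4))
        = ∫ z : ℝ, Complex.exp (Complex.I * ((-x : ℝ) : ℂ) * (z : ℂ))
          * φc (-(z : ℂ) - Complex.I / 2) / ((z : ℂ)^2 + 1/4)) := by
  -- From the martingale condition, φt * t = 0
  have hzero : (φt * t : ℝ) = 0 := by
    have h := hmart
    rw [hφc (-Complex.I)] at h
    have harg : Complex.I * (-Complex.I) * ((σ:ℂ)^2 * (t:ℂ) / 2) + (-Complex.I)^2 * ((σ:ℂ)^2 * (t:ℂ) / 2) = 0 := by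
      rw [show (-Complex.I)^2 = -1 by simp [pow_two, Complex.I_mul_I],
        show Complex.I * -Complex.I = 1 by simp [Complex.I_mul_I]]
      ring
    rw [harg, hL0, one_mul] at h
    have h2 : Complex.I * (-Complex.I) * ((φt:ℂ) * (t:ℂ)) = ((φt * t : ℝ) : ℂ) := by
      rw [show Complex.I * -Complex.I = 1 by simp [Complex.I_mul_I]]
      push_cast; ring
    rw [h2, ← Complex.ofReal_exp] at h
    have h3 : Real.exp (φt * t) = 1 := by exact_mod_cast h
    exact Real.exp_eq_exp.mp (by rw [h3, Real.exp_zero])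
  have key : ∀ z : ℝ, φc (-(z : ℂ) - Complex.I / 2) = L ((σ^2 * t * (z^2 + 1/4) / 2 : ℝ) : ℂ) := by
    intro z
    rw [hφc]
    have harg : Complex.I * (-(z : ℂ) - Complex.I / 2) * (σ^2 * t / 2)
        + (-(z : ℂ) - Complex.I / 2)^2 * (σ^2 * t / 2)
        = ((σ^2 * t * (z^2 + 1/4) / 2 : ℝ) : ℂ) := by
      have h2 : (Complex.I)^2 = -1 := Complex.I_sq
      push_cast
      ring_nf
      rw [h2]
      ring
    rw [harg]
    have hz : ((φt:ℂ) * (t:ℂ)) = ((φt * t : ℝ) : ℂ) := by push_cast; ring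
    rw [hz]
    rw [show ((φt * t : ℝ) : ℂ) = 0 by exact_mod_cast hzero]
    simp
  have hsym : ∀ z : ℝ, φc (-(z : ℂ) - Complex.I / 2) = φc ((z : ℂ) - Complex.I / 2) := by
    intro z
    have h1 := key z
    have h2 := key (-z)
    rw [show ((-z : ℝ) : ℂ) = -(z : ℂ) by push_cast; ring, neg_neg] at h2
    rw [show ((-z : ℝ)^2 : ℝ) = z^2 by ring] at h2
    rw [h1, ← h2]
  have hreal : ∀ z : ℝ, (φc (-(z : ℂ) - Complex.I / 2)).im = 0 := by
    intro z
    rw [key z]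
    exact hLreal _ (by positivity)
  refine ⟨key, hsym, hreal, ?_⟩
  intro x
  have := MeasureTheory.integral_neg_eq_self
    (fun z : ℝ => Complex.exp (Complex.I * ((-x : ℝ) : ℂ) * (z : ℂ))
      * φc (-(z : ℂ) - Complex.I / 2) / ((z : ℂ)^2 + 1/4)) (MeasureTheory.volume)
  rw [← this]
  apply MeasureTheory.integral_congr_ae
  filter_upwards with z
  have e1 : Complex.exp (Complex.I * ((-x : ℝ) : ℂ) * ((-z : ℝ) : ℂ))
      = Complex.exp (Complex.I * (x : ℂ) * (z : ℂ)) := by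
    push_cast; ring_nf
  have e2 : φc (-((-z : ℝ) : ℂ) - Complex.I / 2) = φc (-(z : ℂ) - Complex.I / 2) := by
    rw [show -((-z : ℝ) : ℂ) = (z : ℂ) by push_cast; ring]
    exact (hsym z).symm
  have e3 : (((-z : ℝ) : ℂ))^2 = ((z : ℂ))^2 := by push_cast; ring
  simp only [e1, e2, e3]
end

section
/- Let α ∈ (0,1), k̄ > 0, η̄ > 0, β ≥ -δ > 0 with δ < 0 ≤ -δ ≤ β, and σ̄ > 0. Then the function g₁(t) = (1/2 + η̄t^δ) - √((1/2 + η̄t^δ)² + 2(1-α)/(σ̄²k̄t^β)) is nondecreasing on (0,∞). -/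
/-!
Write `g₁ = u - √(u² + v)` with `u(t) = 1/2 + η̄ t^δ` and `v(t) = 2(1-α)/(σ̄² k̄ t^β) ≥ 0`.
For `0 < s ≤ t` put `c = (t/s)^δ ∈ (0, 1]`. Then `u(t) ≥ c u(s)`, and since `β ≥ -δ`,
`v(t) = (t/s)^(-β) v(s) ≤ c v(s)`. The number `√(u² + v) - u` is the nonnegative root `x` of
`x (x + 2u) = v`, and this root cannot grow when `u` is replaced by something `≥ c u` and `v` by
something `≤ c v`; hence `g₁(s) ≤ g₁(t)`.
-/

theorem sub_sqrt_sq_add_le_sub_sqrt_sq_add {u₁ u₂ v₁ v₂ c : ℝ} (hc₀ : 0 ≤ c) (hc₁ : c ≤ 1)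
    (hv₁ : 0 ≤ v₁) (hv₂ : 0 ≤ v₂) (hu : c * u₁ ≤ u₂) (hv : v₂ ≤ c * v₁) :
    u₁ - √(u₁ ^ 2 + v₁) ≤ u₂ - √(u₂ ^ 2 + v₂) := by
  set x := √(u₁ ^ 2 + v₁) - u₁ with hx_def
  set y := √(u₂ ^ 2 + v₂) - u₂ with hy_def
  have hx : x * (x + 2 * u₁) = v₁ := by
    have := Real.sq_sqrt (by positivity : 0 ≤ u₁ ^ 2 + v₁)
    rw [hx_def]; nlinarith
  have hy : y * (y + 2 * u₂) = v₂ := by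
    have := Real.sq_sqrt (by positivity : 0 ≤ u₂ ^ 2 + v₂)
    rw [hy_def]; nlinarith
  have hy₀ : 0 ≤ y := by
    have := Real.abs_le_sqrt (le_add_of_nonneg_right hv₂ : u₂ ^ 2 ≤ u₂ ^ 2 + v₂)
    linarith [le_abs_self u₂]
  have hxc : 0 ≤ x + c * u₁ := by
    have := Real.abs_le_sqrt (le_add_of_nonneg_right hv₁ : u₁ ^ 2 ≤ u₁ ^ 2 + v₁)
    nlinarith [le_abs_self u₁, neg_abs_le u₁]
  suffices y ≤ x by linarith
  by_contra! hxy
  -- `v₂ = y (y + 2u₂) ≥ y (y + 2c u₁) > x (x + 2c u₁) ≥ c x (x + 2u₁) = c v₁`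
  nlinarith [mul_le_mul_of_nonneg_left hu hy₀, mul_nonneg (sub_nonneg.2 hc₁) (sq_nonneg x)]

theorem stmt6_general (α kbar ηbar σbar β δ : ℝ)
    (hα1 : α < 1)
    (hk : 0 < kbar)
    (hδneg : δ < 0) (hβδ : -δ ≤ β) :
    MonotoneOn (fun t : ℝ => (1/2 + ηbar * t ^ δ)
        - Real.sqrt ((1/2 + ηbar * t ^ δ)^2 + 2 * (1 - α) / (σbar^2 * kbar * t ^ β)))
      (Set.Ioi 0) := by
  intro s (hs : 0 < s) t (ht : 0 < t) hst
  set r := t / s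
  have hr : 1 ≤ r := (one_le_div hs).2 hst
  have ht_eq : t = r * s := (div_mul_cancel₀ t hs.ne').symm
  have hc₁ : r ^ δ ≤ 1 := Real.rpow_le_one_of_one_le_of_nonpos hr hδneg.le
  have hrβ : (r ^ β)⁻¹ ≤ r ^ δ := by
    rw [← Real.rpow_neg (by positivity)]
    exact Real.rpow_le_rpow_of_exponent_le hr (by linarith)
  have hv : ∀ x : ℝ, 0 < x → 0 ≤ 2 * (1 - α) / (σbar ^ 2 * kbar * x ^ β) := fun x hx => by
    have := sub_nonneg.2 hα1.le
    positivity
  apply sub_sqrt_sq_add_le_sub_sqrt_sq_add (by positivity) hc₁ (hv s hs) (hv t ht)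
  · rw [ht_eq, Real.mul_rpow (by positivity) hs.le]
    nlinarith
  · rw [ht_eq, Real.mul_rpow (by positivity) hs.le, mul_comm (r ^ β), ← mul_assoc,
      div_mul_eq_div_div, mul_comm (r ^ δ), div_eq_mul_inv]
    exact mul_le_mul_of_nonneg_left hrβ (hv s hs)

/-- For the power-law scaling ATS with `δ < 0 ≤ -δ ≤ β`, the function
`g₁(t) = (1/2 + η̄t^δ) - √((1/2 + η̄t^δ)² + 2(1-α)/(σ̄²k̄t^β))` is nondecreasing on `(0,∞)`. -/
theorem stmt6 (α kbar ηbar σbar β δ : ℝ)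
    (hα0 : 0 < α) (hα1 : α < 1)
    (hk : 0 < kbar) (hη : 0 < ηbar) (hσ : 0 < σbar)
    (hδneg : δ < 0) (hβδ : -δ ≤ β) :
    MonotoneOn (fun t : ℝ => (1/2 + ηbar * t ^ δ)
        - Real.sqrt ((1/2 + ηbar * t ^ δ)^2 + 2 * (1 - α) / (σbar^2 * kbar * t ^ β)))
      (Set.Ioi 0) :=
  stmt6_general α kbar ηbar σbar β δ hα1 hk hδneg hβδ
end

section
/- Let s > 0, σ > 0, m ∈ ℝ. Then |∫_{-1}^{1} (x/(√(2πs)σ))·e^{-((x + sσ²m)/(√s σ))²} dx| ≤ σ²s|m|. -/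
open MeasureTheory

lemma stmt10_symm_neg (F : ℝ → ℝ) :
    ∫ x in Set.Ioo (-1:ℝ) 1, F (-x) = ∫ x in Set.Ioo (-1:ℝ) 1, F x := by
  rw [← integral_Ioc_eq_integral_Ioo, ← integral_Ioc_eq_integral_Ioo,
    ← intervalIntegral.integral_of_le (by norm_num : (-1:ℝ) ≤ 1),
    ← intervalIntegral.integral_of_le (by norm_num : (-1:ℝ) ≤ 1),
    intervalIntegral.integral_comp_neg]
  norm_num

lemma stmt10_aux (b K c : ℝ) (hb : 0 < b) (hK : 0 ≤ K) (hc : 0 ≤ c)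
    (hKb : K * Real.sqrt (Real.pi / b) ≤ 1) :
    |∫ x in Set.Ioo (-1:ℝ) 1, x * K * Real.exp (-(b * (x + c)^2))| ≤ c := by
  set f : ℝ → ℝ := fun x => x * K * Real.exp (-(b * (x + c)^2)) with hfdef
  have h1 : Integrable (fun x : ℝ => x * Real.exp (-(b * x^2))) := by
    simpa [neg_mul] using integrable_mul_exp_neg_mul_sq hb
  have h2 : Integrable (fun x : ℝ => Real.exp (-(b * x^2))) := by
    simpa [neg_mul] using integrable_exp_neg_mul_sq hb
  have h1c : Integrable (fun x : ℝ => (x + c) * Real.exp (-(b * (x + c)^2))) :=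
    h1.comp_add_right c
  have h2c : Integrable (fun x : ℝ => Real.exp (-(b * (x + c)^2))) := h2.comp_add_right c
  have hf : Integrable f := by
    have h3 := ((h1c.const_mul K).sub (h2c.const_mul (c * K)))
    refine h3.congr (Filter.Eventually.of_forall fun x => ?_)
    simp only [Pi.sub_apply, hfdef]; ring
  -- the full integral
  have hodd : ∫ x : ℝ, x * Real.exp (-(b * x^2)) = 0 := by
    have h := integral_neg_eq_self (fun x : ℝ => x * Real.exp (-(b * x^2)))
      (volume : Measure ℝ)
    simp only [neg_sq, neg_mul] at h
    rw [integral_neg] at h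
    linarith
  have hgauss : ∫ x : ℝ, Real.exp (-(b * x^2)) = Real.sqrt (Real.pi / b) := by
    simpa [neg_mul] using integral_gaussian b
  have hfull : ∫ x, f x = -(c * (K * Real.sqrt (Real.pi / b))) := by
    have hshift : ∫ x, f x
        = ∫ x, (K * (x * Real.exp (-(b * x^2))) - (c * K) * Real.exp (-(b * x^2))) := by
      rw [← integral_add_right_eq_self
        (fun x => (K * (x * Real.exp (-(b * x^2))) - (c * K) * Real.exp (-(b * x^2)))) c]
      congr 1; funext x; simp only [hfdef]; ring
    rw [hshift, integral_sub (by exact (h1.const_mul K)) (by exact (h2.const_mul (c * K))),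
      integral_const_mul, integral_const_mul, hodd, hgauss]
    ring
  -- pointwise sign fact
  have hneg : ∀ x : ℝ, 0 ≤ x → f (-x) + f x ≤ 0 := by
    intro x hx
    have hmono : Real.exp (-(b * (x + c)^2)) ≤ Real.exp (-(b * (-x + c)^2)) := by
      apply Real.exp_le_exp.2
      apply neg_le_neg
      apply mul_le_mul_of_nonneg_left _ hb.le
      nlinarith [mul_nonneg hx hc]
    have hrw : f (-x) + f x
        = x * K * (Real.exp (-(b * (x + c)^2)) - Real.exp (-(b * (-x + c)^2))) := by
      simp only [hfdef]; ring
    rw [hrw]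
    exact mul_nonpos_of_nonneg_of_nonpos (mul_nonneg hx hK) (by linarith)
  -- splitting the real line
  have hsplit : (∫ x in Set.Iic (-1:ℝ), f x)
      + ((∫ x in Set.Ioc (-1:ℝ) 1, f x) + ∫ x in Set.Ioi (1:ℝ), f x) = ∫ x, f x := by
    rw [← intervalIntegral.integral_Iic_add_Ioi (hf.integrableOn) (hf.integrableOn)]
    congr 1
    rw [← setIntegral_union (Set.Ioc_disjoint_Ioi le_rfl) measurableSet_Ioi
      hf.integrableOn hf.integrableOn, Set.Ioc_union_Ioi_eq_Ioi (by norm_num : (-1:ℝ) ≤ 1)]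
  -- the tail is nonpositive
  have htail : (∫ x in Set.Iic (-1:ℝ), f x) + (∫ x in Set.Ioi (1:ℝ), f x) ≤ 0 := by
    have h1' : ∫ x in Set.Iic (-1:ℝ), f x = ∫ x in Set.Ioi (1:ℝ), f (-x) :=
      (integral_comp_neg_Ioi 1 f).symm
    rw [h1', ← integral_add (hf.comp_neg.integrableOn) (hf.integrableOn)]
    apply setIntegral_nonpos measurableSet_Ioi
    intro x hx
    exact hneg x (by have := Set.mem_Ioi.1 hx; linarith)
  -- the body is nonpositive
  have hbody : ∫ x in Set.Ioo (-1:ℝ) 1, f x ≤ 0 := by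
    have e1 : ∫ x in Set.Ioo (-1:ℝ) 1, f x = ∫ x in Set.Ioc (0:ℝ) 1, (f (-x) + f x) := by
      rw [← integral_Ioc_eq_integral_Ioo,
        ← intervalIntegral.integral_of_le (by norm_num : (-1:ℝ) ≤ 1),
        ← intervalIntegral.integral_add_adjacent_intervals (a := (-1:ℝ)) (b := 0) (c := 1)
          (hf.intervalIntegrable) (hf.intervalIntegrable),
        ← intervalIntegral.integral_of_le (by norm_num : (0:ℝ) ≤ 1)]
      rw [intervalIntegral.integral_add (hf.comp_neg.intervalIntegrable)
        (hf.intervalIntegrable)]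
      congr 1
      rw [intervalIntegral.integral_comp_neg f]
      norm_num
    rw [e1]
    apply setIntegral_nonpos measurableSet_Ioc
    intro x hx
    exact hneg x hx.1.le
  -- conclude
  have hlow : -(c * (K * Real.sqrt (Real.pi / b))) ≤ ∫ x in Set.Ioo (-1:ℝ) 1, f x := by
    have : ∫ x in Set.Ioc (-1:ℝ) 1, f x = ∫ x in Set.Ioo (-1:ℝ) 1, f x :=
      integral_Ioc_eq_integral_Ioo
    rw [← hfull]
    linarith [hsplit, htail, this]
  have hc' : c * (K * Real.sqrt (Real.pi / b)) ≤ c := by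
    calc c * (K * Real.sqrt (Real.pi / b)) ≤ c * 1 := by
          exact mul_le_mul_of_nonneg_left hKb hc
      _ = c := mul_one c
  rw [abs_le]
  constructor
  · linarith
  · linarith

/-- The central inequality in Lemma A.2: for `s > 0`, `σ > 0`, `m ∈ ℝ`,
`|∫_{-1}^{1} (x/(√(2πs)σ))·e^{-((x+sσ²m)/(√sσ))²} dx| ≤ σ²s|m|`. -/
theorem stmt10 (s σ m : ℝ) (hs : 0 < s) (hσ : 0 < σ) :
    |∫ x in Set.Ioo (-1:ℝ) 1,
        (x / (Real.sqrt (2 * Real.pi * s) * σ))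
          * Real.exp (-(((x + s * σ^2 * m) / (Real.sqrt s * σ))^2))|
      ≤ σ^2 * s * |m| := by
  -- notation
  set K : ℝ := (Real.sqrt (2 * Real.pi * s) * σ)⁻¹ with hKdef
  set b : ℝ := (s * σ^2)⁻¹ with hbdef
  have hb : 0 < b := by positivity
  have hK : 0 ≤ K := by positivity
  have hKb : K * Real.sqrt (Real.pi / b) ≤ 1 := by
    have hπ := Real.pi_pos
    have e1 : Real.pi / b = Real.pi * s * σ^2 := by
      rw [hbdef, div_eq_mul_inv, inv_inv]; ring
    have e2 : Real.sqrt (Real.pi * s * σ^2) = Real.sqrt Real.pi * Real.sqrt s * σ := by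
      rw [Real.sqrt_mul (by positivity), Real.sqrt_mul hπ.le, Real.sqrt_sq hσ.le]
    have e3 : Real.sqrt (2 * Real.pi * s) = Real.sqrt 2 * Real.sqrt Real.pi * Real.sqrt s := by
      rw [Real.sqrt_mul (by positivity), Real.sqrt_mul (by norm_num)]
    have hpos : (0:ℝ) < Real.sqrt Real.pi * Real.sqrt s * σ := by positivity
    rw [hKdef, e1, e2, e3]
    rw [show Real.sqrt 2 * Real.sqrt Real.pi * Real.sqrt s * σ
        = Real.sqrt 2 * (Real.sqrt Real.pi * Real.sqrt s * σ) by ring]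
    rw [mul_inv, mul_assoc, inv_mul_cancel₀ (ne_of_gt hpos), mul_one]
    have h2 : (1:ℝ) ≤ Real.sqrt 2 := by
      rw [show (1:ℝ) = Real.sqrt 1 from (Real.sqrt_one).symm]
      exact Real.sqrt_le_sqrt (by norm_num)
    exact inv_le_one_of_one_le₀ h2
  have hsq : ∀ y : ℝ, (y / (Real.sqrt s * σ))^2 = b * y^2 := by
    intro y
    rw [div_pow, mul_pow, Real.sq_sqrt hs.le, hbdef]
    rw [div_eq_mul_inv, mul_comm]
  rcases le_or_gt 0 m with hm | hm
  · have key := stmt10_aux b K (s * σ^2 * m) hb hK (by positivity) hKb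
    have e : ∫ x in Set.Ioo (-1:ℝ) 1,
        (x / (Real.sqrt (2 * Real.pi * s) * σ))
          * Real.exp (-(((x + s * σ^2 * m) / (Real.sqrt s * σ))^2))
        = ∫ x in Set.Ioo (-1:ℝ) 1, x * K * Real.exp (-(b * (x + s * σ^2 * m)^2)) := by
      congr 1; funext x
      rw [hsq, div_eq_mul_inv, ← hKdef]
    rw [e]
    calc |∫ x in Set.Ioo (-1:ℝ) 1, x * K * Real.exp (-(b * (x + s * σ^2 * m)^2))|
        ≤ s * σ^2 * m := key
      _ = σ^2 * s * |m| := by rw [abs_of_nonneg hm]; ring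
  · have key := stmt10_aux b K (s * σ^2 * (-m)) hb hK (mul_nonneg (by positivity) (by linarith)) hKb
    have e : ∫ x in Set.Ioo (-1:ℝ) 1,
        (x / (Real.sqrt (2 * Real.pi * s) * σ))
          * Real.exp (-(((x + s * σ^2 * m) / (Real.sqrt s * σ))^2))
        = -∫ x in Set.Ioo (-1:ℝ) 1, x * K * Real.exp (-(b * (x + s * σ^2 * (-m))^2)) := by
      rw [← stmt10_symm_neg (fun x => (x / (Real.sqrt (2 * Real.pi * s) * σ))
        * Real.exp (-(((x + s * σ^2 * m) / (Real.sqrt s * σ))^2)))]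
      rw [← integral_neg]
      congr 1; funext x
      have : (-x + s * σ^2 * m)^2 = (x + s * σ^2 * (-m))^2 := by ring
      rw [hsq, this, div_eq_mul_inv, ← hKdef]
      ring
    rw [e, abs_neg]
    calc |∫ x in Set.Ioo (-1:ℝ) 1, x * K * Real.exp (-(b * (x + s * σ^2 * (-m))^2))|
        ≤ s * σ^2 * (-m) := key
      _ = σ^2 * s * |m| := by rw [abs_of_neg hm]; ring
end
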